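/- Let S be a type and let M := S → Option ({x : ZMod 3 // x ≠ 0}) with the partial order p ≤ q iff for every i, q i = none or q i = p i (the |S| critical multi-cubic lattice over ℤ_3). The map f sending m to the pair ({i : S | m i = some 1}, {i : S | m i = some (−1)}) is a bijection from M onto the set of pairs (A⁺, A⁻) of disjoint subsets of S, and for all m, n ∈ M: m ≤ n if and only if (f n).1 ⊆ (f m).1 and (f n).2 ⊆ (f m).2. Hence M is order-isomorphic to the cubic lattice of signed subsets of S. -/
import Mathlib


/-- The order on the model `S → Option V` of the critical multi-cubic lattice:
`p ≤ q` iff at every index `q` is the indeterminate `X` (= `none`) or agrees with `p`. -/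
def MCLle {S V : Type*} (p q : S → Option V) : Prop := ∀ i, q i = none ∨ q i = p i

/-- The map sending an element `m` of the `|S|` critical multi-cubic lattice over `ℤ_3` to
the signed set `({i | m i = some 1}, {i | m i = some (-1)})`. -/
def cubicF (S : Type*) (m : S → Option {x : ZMod 3 // x ≠ 0}) : Set S × Set S :=
  ({i | m i = some ⟨1, by decide⟩}, {i | m i = some ⟨-1, by decide⟩})

lemma val_cases (x : {x : ZMod 3 // x ≠ 0}) :
    x = ⟨1, one_ne_zero⟩ ∨ x = ⟨-1, neg_ne_zero.mpr one_ne_zero⟩ := by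
  obtain ⟨x, hx⟩ := x
  simp only [Subtype.mk.injEq]
  revert hx
  revert x
  decide

/-- `cubicF` is a bijection from `M = S → Option {x : ZMod 3 // x ≠ 0}`
onto the set of pairs of disjoint subsets of `S` (signed sets), and it reverses order:
`m ≤ n` iff `(f n).1 ⊆ (f m).1` and `(f n).2 ⊆ (f m).2`. Hence `M` is order-isomorphic to
the cubic lattice of signed subsets of `S`. -/
theorem stmt_17 (S : Type*) :
    Function.Injective (cubicF S) ∧
    Set.range (cubicF S) = {p : Set S × Set S | Disjoint p.1 p.2} ∧
    (∀ m n : S → Option {x : ZMod 3 // x ≠ 0},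
      MCLle m n ↔ (cubicF S n).1 ⊆ (cubicF S m).1 ∧ (cubicF S n).2 ⊆ (cubicF S m).2) := by
  classical
  have opt_cases : ∀ m : S → Option {x : ZMod 3 // x ≠ 0}, ∀ i,
      m i = none ∨ m i = some ⟨1, by decide⟩ ∨ m i = some ⟨-1, by decide⟩ := by
    intro m i
    cases h : m i with
    | none => exact Or.inl rfl
    | some v =>
      rcases val_cases v with hv | hv
      · exact Or.inr (Or.inl (by rw [hv]))
      · exact Or.inr (Or.inr (by rw [hv]))
  refine ⟨?_, ?_, ?_⟩
  · intro m n h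
    have h1 : {i | m i = some ⟨1, by decide⟩} = {i | n i = some ⟨1, by decide⟩} :=
      congrArg Prod.fst h
    have h2 : {i | m i = some ⟨-1, by decide⟩} = {i | n i = some ⟨-1, by decide⟩} :=
      congrArg Prod.snd h
    funext i
    have e1 : (m i = some ⟨1, by decide⟩) ↔ (n i = some ⟨1, by decide⟩) :=
      Set.ext_iff.mp h1 i
    have e2 : (m i = some ⟨-1, by decide⟩) ↔ (n i = some ⟨-1, by decide⟩) :=
      Set.ext_iff.mp h2 i
    rcases opt_cases m i with hm | hm | hm <;> rcases opt_cases n i with hn | hn | hn <;>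
      simp_all
  · ext p
    constructor
    · rintro ⟨m, rfl⟩
      simp only [Set.mem_setOf_eq]
      rw [Set.disjoint_left]
      intro i h1 h2
      simp only [cubicF, Set.mem_setOf_eq] at h1 h2
      rw [h1] at h2
      exact absurd (Option.some.inj h2) (by decide)
    · intro hp
      refine ⟨fun i => if i ∈ p.1 then some ⟨1, by decide⟩ else
        if i ∈ p.2 then some ⟨-1, by decide⟩ else none, ?_⟩
      obtain ⟨A, B⟩ := p
      simp only [Set.mem_setOf_eq] at hp
      simp only [cubicF, Prod.mk.injEq]
      constructor
      · ext i
        simp only [Set.mem_setOf_eq]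
        by_cases hA : i ∈ A
        · rw [if_pos hA]
          exact iff_of_true rfl hA
        · by_cases hB : i ∈ B
          · rw [if_neg hA, if_pos hB]
            refine iff_of_false ?_ hA
            intro h
            exact absurd (congrArg Subtype.val (Option.some.inj h)) (by decide)
          · rw [if_neg hA, if_neg hB]
            exact iff_of_false (by simp) hA
      · ext i
        simp only [Set.mem_setOf_eq]
        by_cases hA : i ∈ A
        · rw [if_pos hA]
          refine iff_of_false ?_ (Set.disjoint_left.mp hp hA)
          intro h
          exact absurd (congrArg Subtype.val (Option.some.inj h)) (by decide)
        · by_cases hB : i ∈ B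
          · rw [if_neg hA, if_pos hB]
            exact iff_of_true rfl hB
          · rw [if_neg hA, if_neg hB]
            exact iff_of_false (by simp) hB
  · intro m n
    constructor
    · intro h
      constructor
      · intro i hi
        simp only [cubicF, Set.mem_setOf_eq] at hi ⊢
        rcases h i with h' | h' <;> simp_all
      · intro i hi
        simp only [cubicF, Set.mem_setOf_eq] at hi ⊢
        rcases h i with h' | h' <;> simp_all
    · rintro ⟨h1, h2⟩ i
      rcases opt_cases n i with hn | hn | hn
      · exact Or.inl hn
      · exact Or.inr (by rw [hn, h1 hn])
      · exact Or.inr (by rw [hn, h2 hn])
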